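/- arXiv:2602.01657 — 5 statements merged into one kernel-verified Lean document; each statement's English description precedes it below -/
import Mathlib

section
/- The binary code of length 24 generated by the block matrix [[G8, 0, G8], [0, G8, G8], [G8', G8', G8']] — where G8 generates the (8,4,4) Reed–Muller code and G8' is a column-permuted copy of G8 such that G8 and G8' share no common weight-4 codewords — has dimension 12 and minimum Hamming distance 8 (i.e., it is a (24,12,8) extended Golay code). -/
open Matrix

/-- Generator matrix of the (8,4,4) Reed–Muller code. -/
def G8 : Matrix (Fin 4) (Fin 8) (ZMod 2) :=
  !![1,1,1,1,0,0,0,0; 1,1,0,0,1,1,0,0; 1,0,1,0,1,0,1,0; 1,1,1,1,1,1,1,1]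

/-- Column-permuted copy of G8 (permutation π3). -/
def G8' : Matrix (Fin 4) (Fin 8) (ZMod 2) :=
  !![0,1,1,1,1,0,0,0; 1,0,0,1,1,1,0,0; 1,1,0,0,1,0,1,0; 1,1,1,1,1,1,1,1]

/-- Assemble a 12×24 matrix from a 3×3 array of 4×8 blocks. -/
def build (M : Fin 3 → Fin 3 → Matrix (Fin 4) (Fin 8) (ZMod 2)) :
    Matrix (Fin 12) (Fin 24) (ZMod 2) :=
  Matrix.of fun i j =>
    M ⟨i.1 / 4, by have := i.2; omega⟩ ⟨j.1 / 8, by have := j.2; omega⟩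
      ⟨i.1 % 4, by omega⟩ ⟨j.1 % 8, by omega⟩

/-- Assemble a 24×24 matrix from a 3×3 array of 8×8 blocks. -/
def build8 (M : Fin 3 → Fin 3 → Matrix (Fin 8) (Fin 8) (ZMod 2)) :
    Matrix (Fin 24) (Fin 24) (ZMod 2) :=
  Matrix.of fun i j =>
    M ⟨i.1 / 8, by have := i.2; omega⟩ ⟨j.1 / 8, by have := j.2; omega⟩
      ⟨i.1 % 8, by omega⟩ ⟨j.1 % 8, by omega⟩

/-- The binary linear code generated by (the rows of) a matrix. -/
def code {k n : ℕ} (M : Matrix (Fin k) (Fin n) (ZMod 2)) :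
    Submodule (ZMod 2) (Fin n → ZMod 2) :=
  LinearMap.range M.vecMulLinear

/-- The cubing-construction generator matrix of the (24,12,8) extended Golay code. -/
def Ghat : Matrix (Fin 12) (Fin 24) (ZMod 2) :=
  build ![![G8, 0, G8], ![0, G8, G8], ![G8', G8', G8']]

/-- The 2×2 polar kernel. -/
def F2k : Matrix (Fin 2) (Fin 2) (ZMod 2) := !![1,0; 1,1]

/-- F8 = F2 ⊗ F2 ⊗ F2 (Kronecker product), written entrywise. -/
def F8 : Matrix (Fin 8) (Fin 8) (ZMod 2) :=
  Matrix.of fun i j =>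
    F2k ⟨i.1 / 4, by have := i.2; omega⟩ ⟨j.1 / 4, by have := j.2; omega⟩ *
    F2k ⟨i.1 / 2 % 2, by omega⟩ ⟨j.1 / 2 % 2, by omega⟩ *
    F2k ⟨i.1 % 2, by omega⟩ ⟨j.1 % 2, by omega⟩

/-- The 8×8 convolution matrix T of Proposition 1: identity plus extra ones at
(one-based) positions (2,3), (2,7), (3,4), (3,6), (4,5). -/
def T8 : Matrix (Fin 8) (Fin 8) (ZMod 2) :=
  Matrix.of fun i j =>
    if i = j ∨ (i = 1 ∧ j = 2) ∨ (i = 1 ∧ j = 6) ∨ (i = 2 ∧ j = 3) ∨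
       (i = 2 ∧ j = 5) ∨ (i = 3 ∧ j = 4) then 1 else 0

/-! A codeword is `(a + x, b + x, a + b + x)` with `a, b` in the Reed–Muller code `A` and `x` in
its permuted copy `B` (Turyn's construction), and `(a, b, x)` determines it, whence dimension
`4 + 4 + 4`. Both codes are doubly even, so `wt (u + v) = wt u + wt v - 2 wt (u * v)` makes every
codeword weight divisible by `4`. If `x ∉ A`, no block vanishes and each has even weight, so the
weight is at least `6`, hence `8`. If `x ∈ A`, the blocks lie in `A` and sum to `x ∈ A ⊓ B`,
whose only nonzero vector has weight `8`; a total weight of `4` would then leave one block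
heavier than the other two together, against the triangle inequality. -/

section HammingWeight

variable {ι : Type*} [Fintype ι]

theorem hammingNorm_add_le {β : ι → Type*} [∀ i, AddGroup (β i)] [∀ i, DecidableEq (β i)]
    (x y : ∀ i, β i) : hammingNorm (x + y) ≤ hammingNorm x + hammingNorm y := by
  have := hammingDist_triangle 0 x (x + y)
  rwa [hammingDist_zero_left, hammingDist_eq_hammingNorm, neg_add_cancel_left] at this

theorem hammingNorm_le_of_add_add_add_eq_zero {β : ι → Type*} [∀ i, AddCommGroup (β i)]
    [∀ i, DecidableEq (β i)] {u v w x : ∀ i, β i} (h : u + v + w + x = 0) :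
    hammingNorm u ≤ hammingNorm v + hammingNorm w + hammingNorm x := by
  have hu : u = -(v + w + x) := by rw [← sub_eq_zero, sub_neg_eq_add, ← h]; abel
  calc hammingNorm u
      = hammingDist (v + w + x) 0 := by rw [hu, hammingDist_eq_hammingNorm, add_zero]
    _ = hammingNorm (v + w + x) := hammingDist_zero_right _
    _ ≤ _ := (hammingNorm_add_le _ _).trans (by gcongr; exact hammingNorm_add_le _ _)

theorem hammingNorm_add_add_two_mul_hammingNorm_mul (u v : ι → ZMod 2) :
    hammingNorm (u + v) + 2 * hammingNorm (u * v) = hammingNorm u + hammingNorm v := by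
  have coord : ∀ s t : ZMod 2, (if s + t ≠ 0 then 1 else 0) + 2 * (if s * t ≠ 0 then 1 else 0)
      = (if s ≠ 0 then 1 else 0) + (if t ≠ 0 then 1 else 0) := by decide
  simp only [hammingNorm, Finset.card_filter, Finset.mul_sum, ← Finset.sum_add_distrib]
  exact Finset.sum_congr rfl fun i _ => coord (u i) (v i)

end HammingWeight

section Blocks

variable {R : Type*} {m n : ℕ}

def blockEquiv : (Fin m → Fin n → R) ≃ (Fin (m * n) → R) :=
  (Equiv.curry (Fin m) (Fin n) R).symm.trans (finProdFinEquiv.arrowCongr (Equiv.refl R))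

@[simp]
theorem blockEquiv_apply_finProdFinEquiv (v : Fin m → Fin n → R) (i : Fin m) (t : Fin n) :
    blockEquiv v (finProdFinEquiv (i, t)) = v i t := by
  simp [blockEquiv]

theorem hammingNorm_blockEquiv [Zero R] [DecidableEq R] (v : Fin m → Fin n → R) :
    hammingNorm (blockEquiv v) = ∑ i, hammingNorm (v i) := by
  simp only [hammingNorm, Finset.card_filter]
  rw [← finProdFinEquiv.sum_comp, Fintype.sum_prod_type]
  simp only [blockEquiv_apply_finProdFinEquiv]

end Blocks

theorem vecMul_build (M : Fin 3 → Fin 3 → Matrix (Fin 4) (Fin 8) (ZMod 2))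
    (c : Fin 3 → Fin 4 → ZMod 2) :
    (build M).vecMul (blockEquiv c) = blockEquiv fun J => ∑ I, (M I J).vecMul (c I) := by
  funext j
  obtain ⟨⟨J, s⟩, rfl⟩ := (finProdFinEquiv (m := 3) (n := 8)).surjective j
  have hbuild : ∀ I t, build M (finProdFinEquiv (I, t)) (finProdFinEquiv (J, s)) = M I J t s := by
    intro I t
    have hI := (finProdFinEquiv (m := 3) (n := 4)).symm_apply_apply (I, t)
    have hJ := (finProdFinEquiv (m := 3) (n := 8)).symm_apply_apply (J, s)
    simp only [finProdFinEquiv_symm_apply, Prod.mk.injEq] at hI hJ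
    -- `build` splits indices by `/` and `%`, which is what `Fin.divNat` and `Fin.modNat` do.
    show M (finProdFinEquiv (I, t)).divNat (finProdFinEquiv (J, s)).divNat
      (finProdFinEquiv (I, t)).modNat (finProdFinEquiv (J, s)).modNat = M I J t s
    rw [hI.1, hI.2, hJ.1, hJ.2]
  rw [blockEquiv_apply_finProdFinEquiv, Matrix.vecMul, dotProduct, ← finProdFinEquiv.sum_comp,
    Fintype.sum_prod_type]
  simp only [blockEquiv_apply_finProdFinEquiv, hbuild, Finset.sum_apply, Matrix.vecMul, dotProduct]

def cubing {R : Type*} [Add R] {n : ℕ} (a b x : Fin n → R) : Fin (3 * n) → R :=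
  blockEquiv ![a + x, b + x, a + b + x]

theorem hammingNorm_cubing {R : Type*} [Add R] [Zero R] [DecidableEq R] {n : ℕ}
    (a b x : Fin n → R) :
    hammingNorm (cubing a b x) =
      hammingNorm (a + x) + hammingNorm (b + x) + hammingNorm (a + b + x) := by
  simp [cubing, hammingNorm_blockEquiv, Fin.sum_univ_three, add_assoc]

theorem cubing_eq_zero {R : Type*} [AddCommGroup R] {n : ℕ} {a b x : Fin n → R}
    (h : cubing a b x = 0) : a = 0 ∧ b = 0 ∧ x = 0 := by
  have hblocks : ![a + x, b + x, a + b + x] = 0 := blockEquiv.injective (h.trans rfl)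
  have h₁ : a + x = 0 := congrFun hblocks 0
  have h₂ : b + x = 0 := congrFun hblocks 1
  have h₃ : a + b + x = 0 := congrFun hblocks 2
  have hx : x = 0 := by
    rw [show x = (a + x) + (b + x) - (a + b + x) by abel, h₁, h₂, h₃, add_zero, sub_zero]
  subst hx
  exact ⟨by simpa using h₁, by simpa using h₂, rfl⟩

theorem four_dvd_hammingNorm_cubing {n : ℕ} {a b x : Fin n → ZMod 2}
    (ha : 4 ∣ hammingNorm a) (hb : 4 ∣ hammingNorm b) (hab : 4 ∣ hammingNorm (a + b))
    (hx : 4 ∣ hammingNorm x) : 4 ∣ hammingNorm (cubing a b x) := by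
  rw [hammingNorm_cubing]
  have e₁ := hammingNorm_add_add_two_mul_hammingNorm_mul a x
  have e₂ := hammingNorm_add_add_two_mul_hammingNorm_mul b x
  have e₃ := hammingNorm_add_add_two_mul_hammingNorm_mul (a + b) x
  have e₄ := hammingNorm_add_add_two_mul_hammingNorm_mul (a * x) (b * x)
  rw [← add_mul] at e₄
  omega

theorem eight_le_hammingNorm_cubing {n : ℕ} {A B : Submodule (ZMod 2) (Fin n → ZMod 2)}
    (hA : ∀ a ∈ A, 4 ∣ hammingNorm a) (hB : ∀ x ∈ B, 4 ∣ hammingNorm x)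
    (hAB : ∀ x ∈ A ⊓ B, x ≠ 0 → 8 ≤ hammingNorm x) {a b x : Fin n → ZMod 2}
    (ha : a ∈ A) (hb : b ∈ A) (hx : x ∈ B) (hne : cubing a b x ≠ 0) :
    8 ≤ hammingNorm (cubing a b x) := by
  rw [← hammingNorm_ne_zero_iff] at hne
  have hab : a + b ∈ A := A.add_mem ha hb
  have h4 := four_dvd_hammingNorm_cubing (hA a ha) (hA b hb) (hA _ hab) (hB x hx)
  rw [hammingNorm_cubing] at h4 hne ⊢
  by_cases hxA : x ∈ A
  · have hu := hA _ (A.add_mem ha hxA)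
    have hv := hA _ (A.add_mem hb hxA)
    have hw := hA _ (A.add_mem hab hxA)
    have hx8 : hammingNorm x = 0 ∨ 8 ≤ hammingNorm x := by
      rcases eq_or_ne x 0 with rfl | hx0
      · exact Or.inl hammingNorm_zero
      · exact Or.inr (hAB x ⟨hxA, hx⟩ hx0)
    have hsum : (a + x) + (b + x) + (a + b + x) + x = 0 := by
      funext i
      simp only [Pi.add_apply, Pi.zero_apply]
      ring_nf
      reduce_mod_char
    have t₁ := hammingNorm_le_of_add_add_add_eq_zero hsum
    have t₂ := hammingNorm_le_of_add_add_add_eq_zero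
      (u := b + x) (v := a + b + x) (w := x) (x := a + x) (by rw [← hsum]; abel)
    have t₃ := hammingNorm_le_of_add_add_add_eq_zero
      (u := a + b + x) (v := x) (w := a + x) (x := b + x) (by rw [← hsum]; abel)
    have t₄ := hammingNorm_le_of_add_add_add_eq_zero
      (u := x) (v := a + x) (w := b + x) (x := a + b + x) (by rw [← hsum]; abel)
    omega
  · have two_le : ∀ y ∈ A, 2 ≤ hammingNorm (y + x) := fun y hy => by
      have hyx : y + x ≠ 0 := fun h0 => hxA ((A.add_mem_iff_right hy).1 (h0 ▸ A.zero_mem))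
      have := hammingNorm_pos_iff.2 hyx
      have := hammingNorm_add_add_two_mul_hammingNorm_mul y x
      have := hA y hy
      have := hB x hx
      omega
    have := two_le a ha
    have := two_le b hb
    have := two_le _ hab
    omega

theorem Ghat_vecMul_blockEquiv (c : Fin 3 → Fin 4 → ZMod 2) :
    Ghat.vecMul (blockEquiv c) =
      cubing (G8.vecMul (c 0)) (G8.vecMul (c 1)) (G8'.vecMul (c 2)) := by
  rw [Ghat, vecMul_build, cubing]
  congr 1
  funext J
  fin_cases J <;> simp [Fin.sum_univ_three]

theorem four_dvd_hammingNorm_of_mem_code_G8 : ∀ v ∈ code G8, 4 ∣ hammingNorm v := by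
  rintro _ ⟨a, rfl⟩
  revert a
  simp only [Matrix.vecMulLinear_apply]
  decide

theorem four_dvd_hammingNorm_of_mem_code_G8' : ∀ v ∈ code G8', 4 ∣ hammingNorm v := by
  rintro _ ⟨a, rfl⟩
  revert a
  simp only [Matrix.vecMulLinear_apply]
  decide

theorem eight_le_hammingNorm_of_mem_code_G8_inf_code_G8' :
    ∀ v ∈ code G8 ⊓ code G8', v ≠ 0 → 8 ≤ hammingNorm v := by
  rintro _ ⟨⟨a, rfl⟩, c, hc⟩
  revert a c
  simp only [Matrix.vecMulLinear_apply]
  decide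

theorem eq_zero_of_vecMul_G8_eq_zero : ∀ a : Fin 4 → ZMod 2, G8.vecMul a = 0 → a = 0 := by
  decide

theorem eq_zero_of_vecMul_G8'_eq_zero : ∀ a : Fin 4 → ZMod 2, G8'.vecMul a = 0 → a = 0 := by
  decide

/-- The cubing construction yields a (24,12,8) code: dimension 12 and
minimum Hamming distance 8. -/
theorem golay_dim_and_min_distance :
    Module.finrank (ZMod 2) (code Ghat) = 12 ∧
    (∀ x ∈ code Ghat, x ≠ 0 → 8 ≤ hammingNorm x) ∧
    (∃ x ∈ code Ghat, x ≠ 0 ∧ hammingNorm x = 8) := by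
  have hinj : Function.Injective Ghat.vecMulLinear := by
    refine (injective_iff_map_eq_zero _).2 fun c hc => ?_
    obtain ⟨c, rfl⟩ := (blockEquiv (m := 3) (n := 4)).surjective c
    obtain ⟨h₀, h₁, h₂⟩ := cubing_eq_zero ((Ghat_vecMul_blockEquiv c).symm.trans hc)
    have hc0 : c = 0 := by
      funext i
      fin_cases i
      exacts [eq_zero_of_vecMul_G8_eq_zero _ h₀, eq_zero_of_vecMul_G8_eq_zero _ h₁,
        eq_zero_of_vecMul_G8'_eq_zero _ h₂]
    rw [hc0]
    rfl
  refine ⟨?_, ?_, ⟨Ghat 0, ⟨Pi.single 0 1, Matrix.single_one_vecMul 0 Ghat⟩, by decide⟩⟩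
  · rw [code, LinearMap.finrank_range_of_inj hinj, Module.finrank_fin_fun]
  · rintro _ ⟨c, rfl⟩ hne
    obtain ⟨c, rfl⟩ := (blockEquiv (m := 3) (n := 4)).surjective c
    rw [Matrix.vecMulLinear_apply, Ghat_vecMul_blockEquiv] at hne ⊢
    exact eight_le_hammingNorm_cubing four_dvd_hammingNorm_of_mem_code_G8
      four_dvd_hammingNorm_of_mem_code_G8' eight_le_hammingNorm_of_mem_code_G8_inf_code_G8'
      ⟨c 0, rfl⟩ ⟨c 1, rfl⟩ ⟨c 2, rfl⟩ hne
end

section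
/- Let F3 = [[1,1,0],[1,0,1],[1,1,1]] and G24 = F3 ⊗ F8 (a 24×24 GF(2) matrix). Let T1 be the 24×24 block-diagonal matrix diag(I8, I8, T) with T the 8×8 convolution matrix from Proposition 1. Then the rows of T1·G24 indexed by A1 = {4,6,7,8,12,14,15,16,18,19,20,24} generate the (24,12,8) extended Golay code given by [[G8,G8,0],[G8,0,G8],[G8',G8',G8']]. -/
open Matrix

def F3a : Matrix (Fin 3) (Fin 3) (ZMod 2) := !![1,1,0; 1,0,1; 1,1,1]

/-- G24 = F3 ⊗ F8 for Kernel 1. -/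
def G24a : Matrix (Fin 24) (Fin 24) (ZMod 2) :=
  Matrix.of fun i j =>
    F3a ⟨i.1 / 8, by have := i.2; omega⟩ ⟨j.1 / 8, by have := j.2; omega⟩ *
    F8 ⟨i.1 % 8, by omega⟩ ⟨j.1 % 8, by omega⟩

/-- T1 = diag(I8, I8, T). -/
def T1 : Matrix (Fin 24) (Fin 24) (ZMod 2) :=
  build8 ![![1, 0, 0], ![0, 1, 0], ![0, 0, T8]]

/-!
`T1 * G24` is the block matrix `[[F8, F8, 0], [F8, 0, F8], [T F8, T F8, T F8]]`. Rows 4, 6, 7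
and 8 (one-based) of `F8 = F2^{⊗3}` are the first-order Reed–Muller generators `G8`, and rows
4, 3, 2, 8 of `T F8` are `G8'`, so the rows selected by `A1` are exactly the rows of the Golay
generator matrix.
-/

lemma span_image_rows_eq_code {k m n : ℕ} (N : Matrix (Fin m) (Fin n) (ZMod 2))
    (σ : Fin k → Fin m) (S : Set (Fin m)) (hS : Set.range σ = S) :
    Submodule.span (ZMod 2) ((fun i => N i) '' S) = code (N.submatrix σ id) := by
  rw [code, range_vecMulLinear, ← hS, ← Set.range_comp]
  rfl

lemma build8_eq_submatrix_comp (M : Matrix (Fin 3) (Fin 3) (Matrix (Fin 8) (Fin 8) (ZMod 2))) :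
    build8 M = (comp (Fin 3) (Fin 3) (Fin 8) (Fin 8) (ZMod 2) M).submatrix
      finProdFinEquiv.symm finProdFinEquiv.symm := by
  ext i j
  rfl

lemma build_eq_submatrix_comp (M : Fin 3 → Fin 3 → Matrix (Fin 4) (Fin 8) (ZMod 2)) :
    build M = (comp (Fin 3) (Fin 3) (Fin 4) (Fin 8) (ZMod 2) (of M)).submatrix
      finProdFinEquiv.symm finProdFinEquiv.symm := by
  ext i j
  rfl

lemma build8_mul (A B : Matrix (Fin 3) (Fin 3) (Matrix (Fin 8) (Fin 8) (ZMod 2))) :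
    build8 A * build8 B = build8 (A * B) := by
  simp only [build8_eq_submatrix_comp, submatrix_mul_equiv, ← compRingEquiv_apply, map_mul]

/-- Sends row `r` of block row `a` of a `3 × 3` array of `4 × 8` blocks to row `σ a r` of block
row `a` of a `3 × 3` array of `8 × 8` blocks. -/
def blockRow (σ : Fin 3 → Fin 4 → Fin 8) (p : Fin 12) : Fin 24 :=
  let q : Fin 3 × Fin 4 := finProdFinEquiv.symm p
  finProdFinEquiv (q.1, σ q.1 q.2)

lemma build8_submatrix_blockRow (B : Matrix (Fin 3) (Fin 3) (Matrix (Fin 8) (Fin 8) (ZMod 2)))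
    (M : Fin 3 → Fin 3 → Matrix (Fin 4) (Fin 8) (ZMod 2)) (σ : Fin 3 → Fin 4 → Fin 8)
    (h : ∀ a b, (B a b).submatrix (σ a) id = M a b) :
    (build8 B).submatrix (blockRow σ) id = build M := by
  ext p j
  rw [build8_eq_submatrix_comp, build_eq_submatrix_comp, ← funext₂ h]
  simp only [submatrix_apply, blockRow, Equiv.symm_apply_apply]
  rfl

lemma G24a_eq_build8 : G24a = build8 (F3a.map (· • F8)) := rfl

lemma T1_eq_build8 : T1 = build8 !![1, 0, 0; 0, 1, 0; 0, 0, T8] := rfl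

lemma T1_mul_G24a :
    T1 * G24a = build8 !![F8, F8, 0; F8, 0, F8; T8 * F8, T8 * F8, T8 * F8] := by
  rw [T1_eq_build8, G24a_eq_build8, build8_mul]
  congr 1
  ext i k : 2
  fin_cases i <;> fin_cases k <;> simp [Matrix.mul_apply, Fin.sum_univ_three, F3a]

lemma F8_submatrix_eq_G8 : F8.submatrix ![3, 5, 6, 7] id = G8 := by decide

lemma T8_mul_F8_submatrix_eq_G8' : (T8 * F8).submatrix ![3, 2, 1, 7] id = G8' := by decide

def golayRows : Fin 3 → Fin 4 → Fin 8 := ![![3, 5, 6, 7], ![3, 5, 6, 7], ![3, 2, 1, 7]]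

lemma range_blockRow_golayRows :
    Set.range (blockRow golayRows) = {3, 5, 6, 7, 11, 13, 14, 15, 17, 18, 19, 23} := by
  ext i
  simp only [Set.mem_range, Set.mem_insert_iff, Set.mem_singleton_iff]
  revert i
  decide

/-- The rows of T1·G24 indexed by A1 (one-based {4,6,7,8,12,14,15,16,18,19,20,24})
generate the extended Golay code [[G8,G8,0],[G8,0,G8],[G8',G8',G8']]. -/
theorem kernel1_golay :
    Submodule.span (ZMod 2)
      ((fun i => (T1 * G24a) i) ''
        ({3, 5, 6, 7, 11, 13, 14, 15, 17, 18, 19, 23} : Set (Fin 24))) =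
    code (build ![![G8, G8, 0], ![G8, 0, G8], ![G8', G8', G8']]) := by
  rw [span_image_rows_eq_code _ _ _ range_blockRow_golayRows, T1_mul_G24a,
    build8_submatrix_blockRow]
  intro a b
  fin_cases a <;> fin_cases b <;>
    simp only [golayRows, of_apply, Fin.zero_eta, Fin.mk_one, Fin.reduceFinMk, cons_val,
      submatrix_zero, Pi.zero_apply, F8_submatrix_eq_G8, T8_mul_F8_submatrix_eq_G8']
end

section
/- The extended Golay code generated by Ĝ24 = [[G8,0,G8],[0,G8,G8],[G8',G8',G8']] is self-dual: every two codewords (including a codeword with itself) have even inner product over GF(2), and the code has dimension 12 = 24/2. -/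
open Matrix

def cols12 : Fin 12 → Fin 24 := ![0,1,2,3,4,5,6,8,9,10,12,16]

def Ssub : Matrix (Fin 12) (Fin 12) (ZMod 2) := Matrix.of fun i j => Ghat i (cols12 j)

def Sinv : Matrix (Fin 12) (Fin 12) (ZMod 2) :=
  !![0,1,0,1,1,0,1,1,1,0,1,0; 1,0,1,0,1,0,0,1,1,1,0,1; 1,0,0,1,1,1,0,0,1,1,1,0; 1,1,1,1,1,1,1,1,1,0,0,0; 1,1,0,0,0,1,0,1,0,0,1,1; 0,1,1,0,0,1,1,0,0,1,0,1; 0,0,1,1,0,0,1,1,0,1,1,0; 0,0,0,1,1,1,1,1,0,0,0,1; 0,0,0,0,0,0,1,1,0,0,0,0; 0,0,0,0,0,1,0,1,0,0,0,0; 0,0,0,0,1,0,0,1,0,0,0,0; 0,0,0,1,0,0,0,1,0,0,0,1]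

lemma Ghat_mul_transpose : Ghat * Ghatᵀ = 0 := by decide

lemma Ssub_mul_Sinv : Ssub * Sinv = 1 := by decide

lemma vecMul_inj : Function.Injective Ghat.vecMulLinear := by
  rw [← LinearMap.ker_eq_bot, LinearMap.ker_eq_bot']
  intro u hu
  have hS : u ᵥ* Ssub = 0 := by
    funext j
    have := congrFun hu (cols12 j)
    simpa [Matrix.vecMulLinear, Matrix.vecMul, dotProduct, Ssub] using this
  calc u = u ᵥ* (Ssub * Sinv) := by rw [Ssub_mul_Sinv, Matrix.vecMul_one]
    _ = (u ᵥ* Ssub) ᵥ* Sinv := by rw [Matrix.vecMul_vecMul]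
    _ = 0 := by rw [hS, Matrix.zero_vecMul]

/-- The extended Golay code is self-dual: any two codewords are orthogonal
over GF(2), and the dimension is 12 = 24/2. -/
theorem golay_self_dual :
    (∀ x ∈ code Ghat, ∀ y ∈ code Ghat, ∑ i, x i * y i = 0) ∧
    Module.finrank (ZMod 2) (code Ghat) = 12 := by
  constructor
  · rintro x ⟨u, rfl⟩ y ⟨v, rfl⟩
    have h : (u ᵥ* Ghat) ⬝ᵥ (v ᵥ* Ghat) = 0 := by
      have hv : v ᵥ* Ghat = Ghatᵀ *ᵥ v := (Matrix.mulVec_transpose Ghat v).symm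
      rw [hv, Matrix.dotProduct_mulVec, Matrix.vecMul_vecMul,
        Ghat_mul_transpose, Matrix.vecMul_zero, zero_dotProduct]
    simpa [Matrix.vecMulLinear, dotProduct] using h
  · rw [code, LinearMap.finrank_range_of_inj vecMul_inj]
    simp
end

section
/- The set Λ = {4z + 2c + g : z ∈ ℤ^24, c a codeword of the (24,23,2) single-parity-check code embedded in {0,1}^24 ⊂ ℤ^24, g a codeword of the extended Golay code embedded in {0,1}^24 ⊂ ℤ^24} is an additive subgroup of ℤ^24 (hence a lattice), denoted H24. -/
open Matrix

/-- H24 = 4ℤ²⁴ + 2·PC24 + Golay24 as a subset of ℤ²⁴. -/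
def H24set : Set (Fin 24 → ℤ) :=
  {v | ∃ z : Fin 24 → ℤ, ∃ c g : Fin 24 → ZMod 2,
    (∑ i, c i) = 0 ∧ g ∈ code Ghat ∧
    v = fun i => 4 * z i + 2 * ((c i).val : ℤ) + ((g i).val : ℤ)}

lemma Ghat_row_sum : ∀ i : Fin 12, ∑ j, Ghat i j = 0 := by decide

lemma Ghat_row_dot : ∀ i i' : Fin 12, ∑ j, Ghat i j * Ghat i' j = 0 := by decide

lemma code_sum {g : Fin 24 → ZMod 2} (hg : g ∈ code Ghat) : ∑ i, g i = 0 := by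
  obtain ⟨x, rfl⟩ := hg
  simp only [Matrix.vecMulLinear_apply, Matrix.vecMul, dotProduct]
  rw [Finset.sum_comm]
  simp [← Finset.mul_sum, Ghat_row_sum]

lemma code_dot {g1 g2 : Fin 24 → ZMod 2} (h1 : g1 ∈ code Ghat) (h2 : g2 ∈ code Ghat) :
    ∑ j, g1 j * g2 j = 0 := by
  obtain ⟨x, rfl⟩ := h1
  obtain ⟨y, rfl⟩ := h2
  simp only [Matrix.vecMulLinear_apply, Matrix.vecMul, dotProduct]
  have step : ∀ j : Fin 24, (∑ i, x i * Ghat i j) * (∑ k, y k * Ghat k j)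
      = ∑ i, ∑ k, (x i * y k) * (Ghat i j * Ghat k j) := by
    intro j
    rw [Finset.sum_mul_sum]
    exact Finset.sum_congr rfl fun i _ => Finset.sum_congr rfl fun k _ => by ring
  simp_rw [step]
  rw [Finset.sum_comm]
  refine Finset.sum_eq_zero fun i _ => ?_
  rw [Finset.sum_comm]
  refine Finset.sum_eq_zero fun k _ => ?_
  rw [← Finset.mul_sum, Ghat_row_dot]
  ring

/-- The integer carry produced when adding two coordinates 2a+b and 2c+d (a,b,c,d ∈ {0,1}). -/
def addCarry (a b c d : ZMod 2) : ℤ :=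
  (2*(a.val:ℤ) + b.val + 2*c.val + d.val - 2*((a+c+b*d).val:ℤ) - ((b+d).val:ℤ)) / 4

lemma addCarry_eq : ∀ a b c d : ZMod 2,
    2*(a.val:ℤ) + (b.val:ℤ) + 2*(c.val:ℤ) + (d.val:ℤ)
      = 4 * addCarry a b c d + 2*((a+c+b*d).val:ℤ) + ((b+d).val:ℤ) := by decide

/-- The integer carry produced when negating a coordinate 2a+b (a,b ∈ {0,1}). -/
def negCarry (a b : ZMod 2) : ℤ :=
  (-(2*(a.val:ℤ) + b.val) - 2*((a+b).val:ℤ) - (b.val:ℤ)) / 4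

lemma negCarry_eq : ∀ a b : ZMod 2,
    -(2*(a.val:ℤ) + (b.val:ℤ)) = 4 * negCarry a b + 2*((a+b).val:ℤ) + ((b.val:ℤ)) := by decide

/-- H24 is an additive subgroup of ℤ²⁴, hence a lattice. -/
theorem H24_is_subgroup :
    ∃ H : AddSubgroup (Fin 24 → ℤ), (H : Set (Fin 24 → ℤ)) = H24set := by
  refine ⟨{ carrier := H24set
            zero_mem' := ⟨0, 0, 0, by simp, Submodule.zero_mem _, by funext i; simp⟩
            add_mem' := ?_
            neg_mem' := ?_ }, rfl⟩
  · rintro v w ⟨z1, c1, g1, hc1, hg1, rfl⟩ ⟨z2, c2, g2, hc2, hg2, rfl⟩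
    refine ⟨fun i => z1 i + z2 i + addCarry (c1 i) (g1 i) (c2 i) (g2 i),
      fun i => c1 i + c2 i + g1 i * g2 i, g1 + g2, ?_, Submodule.add_mem _ hg1 hg2, ?_⟩
    · rw [Finset.sum_add_distrib, Finset.sum_add_distrib, hc1, hc2, code_dot hg1 hg2]
      simp
    · funext i
      have := addCarry_eq (c1 i) (g1 i) (c2 i) (g2 i)
      simp only [Pi.add_apply]
      linarith
  · rintro v ⟨z, c, g, hc, hg, rfl⟩
    refine ⟨fun i => -z i + negCarry (c i) (g i), fun i => c i + g i, g, ?_, hg, ?_⟩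
    · rw [Finset.sum_add_distrib, hc, code_sum hg]; simp
    · funext i
      have := negCarry_eq (c i) (g i)
      simp only [Pi.neg_apply]
      linarith
end

section
/- In the lattice H24 = 4ℤ^24 + 2·PC24 + Golay24, the minimum squared Euclidean norm of a nonzero lattice vector is 8. -/
open Matrix

section Aux
open Matrix

/-! ### Nat-level computation -/

/-- Count the low `n` bits of `m`. -/
def wtAux : ℕ → ℕ → ℕ
  | 0, _ => 0
  | n+1, m => m % 2 + wtAux n (m / 2)

def wt24 (m : ℕ) : ℕ := wtAux 24 m

def cwN (n : ℕ) : ℕ :=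
  (n >>> 0 &&& 1) * 983055 ^^^ ((n >>> 1 &&& 1) * 3342387 ^^^ ((n >>> 2 &&& 1) * 5570645 ^^^
  ((n >>> 3 &&& 1) * 16711935 ^^^ ((n >>> 4 &&& 1) * 986880 ^^^ ((n >>> 5 &&& 1) * 3355392 ^^^
  ((n >>> 6 &&& 1) * 5592320 ^^^ ((n >>> 7 &&& 1) * 16776960 ^^^ ((n >>> 8 &&& 1) * 1973790 ^^^
  ((n >>> 9 &&& 1) * 3750201 ^^^ ((n >>> 10 &&& 1) * 5460819 ^^^ ((n >>> 11 &&& 1) * 16777215 ^^^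
  0)))))))))))

def goodN (n : ℕ) : Bool := (cwN n == 0) || (decide (8 ≤ wt24 (cwN n)))

def innerChk : ℕ → ℕ → Bool
  | _, 0 => true
  | hi, b+1 => goodN (64*hi+b) && innerChk hi b

def outerChk : ℕ → Bool
  | 0 => true
  | a+1 => innerChk a 64 && outerChk a

set_option maxRecDepth 4000 in
set_option maxHeartbeats 4000000 in
theorem coreChk : outerChk 64 = true := by decide

theorem innerChk_spec : ∀ (b hi : ℕ), innerChk hi b = true →
    ∀ j, j < b → goodN (64*hi+j) = true := by
  intro b
  induction b with
  | zero => intro hi _ j hj; omega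
  | succ b ih =>
    intro hi h j hj
    rw [show innerChk hi (b+1) = (goodN (64*hi+b) && innerChk hi b) from rfl,
      Bool.and_eq_true] at h
    rcases Nat.lt_succ_iff_lt_or_eq.1 hj with hj' | rfl
    · exact ih hi h.2 j hj'
    · exact h.1

theorem outerChk_spec : ∀ (a : ℕ), outerChk a = true →
    ∀ hi, hi < a → innerChk hi 64 = true := by
  intro a
  induction a with
  | zero => intro _ hi h; omega
  | succ a ih =>
    intro h hi hhi
    rw [show outerChk (a+1) = (innerChk a 64 && outerChk a) from rfl,
      Bool.and_eq_true] at h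
    rcases Nat.lt_succ_iff_lt_or_eq.1 hhi with h' | rfl
    · exact ih h.2 hi h'
    · exact h.1

theorem goodN_all (n : ℕ) (hn : n < 4096) : cwN n = 0 ∨ 8 ≤ wt24 (cwN n) := by
  have h1 : innerChk (n / 64) 64 = true :=
    outerChk_spec 64 coreChk (n / 64) (by omega)
  have h2 : goodN (64 * (n / 64) + n % 64) = true :=
    innerChk_spec 64 (n / 64) h1 (n % 64) (by omega)
  rw [Nat.div_add_mod] at h2
  rw [goodN, Bool.or_eq_true, beq_iff_eq, decide_eq_true_eq] at h2
  exact h2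

/-! ### Encoding vectors over ZMod 2 as natural numbers -/

def enc : {n : ℕ} → (Fin n → ZMod 2) → ℕ
  | 0, _ => 0
  | _+1, v => (v 0).val + 2 * enc (fun i => v i.succ)

theorem zmod2_cases : ∀ a : ZMod 2, a = 0 ∨ a = 1 := by decide

theorem val_lt2 (a : ZMod 2) : a.val < 2 := ZMod.val_lt a

theorem enc_zero : ∀ {n : ℕ}, enc (0 : Fin n → ZMod 2) = 0 := by
  intro n
  induction n with
  | zero => rfl
  | succ n ih => show (0 : ZMod 2).val + 2 * enc (fun _ => (0:ZMod 2)) = 0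
                 rw [show (fun _ : Fin n => (0:ZMod 2)) = (0 : Fin n → ZMod 2) from rfl, ih]
                 rfl

theorem enc_lt : ∀ {n : ℕ} (v : Fin n → ZMod 2), enc v < 2^n := by
  intro n
  induction n with
  | zero => intro v; norm_num [enc]
  | succ n ih =>
    intro v
    have h1 := val_lt2 (v 0)
    have h2 := ih (fun i => v i.succ)
    show (v 0).val + 2 * enc (fun i => v i.succ) < 2^(n+1)
    rw [pow_succ]
    omega

theorem enc_mod_two {n : ℕ} (v : Fin (n+1) → ZMod 2) :
    enc v % 2 = (v 0).val := by
  have h1 := val_lt2 (v 0)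
  show ((v 0).val + 2 * enc (fun i => v i.succ)) % 2 = (v 0).val
  omega

theorem enc_div_two {n : ℕ} (v : Fin (n+1) → ZMod 2) :
    enc v / 2 = enc (fun i => v i.succ) := by
  have h1 := val_lt2 (v 0)
  show ((v 0).val + 2 * enc (fun i => v i.succ)) / 2 = _
  omega

theorem enc_eq_zero : ∀ {n : ℕ} (v : Fin n → ZMod 2), enc v = 0 → v = 0 := by
  intro n
  induction n with
  | zero => intro v _; funext i; exact i.elim0
  | succ n ih =>
    intro v h
    have h' : (v 0).val + 2 * enc (fun i => v i.succ) = 0 := h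
    have h1 : (v 0).val = 0 := by omega
    have h2 : enc (fun i => v i.succ) = 0 := by omega
    have h3 := ih _ h2
    funext i
    refine Fin.cases ?_ ?_ i
    · exact (ZMod.val_eq_zero _).1 h1
    · intro j; exact congrFun h3 j

theorem enc_bitd : ∀ (k : ℕ) {n : ℕ} (v : Fin n → ZMod 2) (hk : k < n),
    enc v / 2^k % 2 = (v ⟨k, hk⟩).val := by
  intro k
  induction k with
  | zero =>
    intro n v hk
    match n, v, hk with
    | n+1, v, hk => simpa using enc_mod_two v
  | succ k ih =>
    intro n v hk
    match n, v, hk with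
    | n+1, v, hk =>
      have h := ih (fun i => v i.succ) (Nat.lt_of_succ_lt_succ hk)
      calc enc v / 2^(k+1) % 2 = enc v / 2 / 2^k % 2 := by
            rw [Nat.div_div_eq_div_mul, ← pow_succ']
        _ = (v ⟨k+1, hk⟩).val := by rw [enc_div_two]; exact h

theorem enc_bit (k : ℕ) {n : ℕ} (v : Fin n → ZMod 2) (hk : k < n) :
    enc v >>> k &&& 1 = (v ⟨k, hk⟩).val := by
  rw [Nat.and_one_is_mod, Nat.shiftRight_eq_div_pow]
  exact enc_bitd k v hk

theorem xor_step (a b : ZMod 2) (s t : ℕ) :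
    (a.val + 2*s) ^^^ (b.val + 2*t) = (a+b).val + 2*(s ^^^ t) := by
  have key : ∀ (a' b' : ℕ), a' < 2 → b' < 2 →
      (a' + 2*s) ^^^ (b' + 2*t) = (a' ^^^ b') + 2*(s ^^^ t) := by
    intro a' b' ha hb
    have hm : ((a' + 2*s) ^^^ (b' + 2*t)) % 2 = (a' + b') % 2 := by
      rw [Nat.xor_mod_two_eq]; omega
    have hd : ((a' + 2*s) ^^^ (b' + 2*t)) / 2 = s ^^^ t := by
      rw [Nat.xor_div_two]
      have h1 : (a' + 2*s)/2 = s := by omega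
      have h2 : (b' + 2*t)/2 = t := by omega
      rw [h1, h2]
    have hab : a' ^^^ b' = (a' + b') % 2 := by
      interval_cases a' <;> interval_cases b' <;> decide
    omega
  have hv : (a+b).val = a.val ^^^ b.val := by
    rcases zmod2_cases a with rfl|rfl <;> rcases zmod2_cases b with rfl|rfl <;> decide
  rw [key a.val b.val (val_lt2 a) (val_lt2 b), hv]

theorem enc_add : ∀ {n : ℕ} (u v : Fin n → ZMod 2), enc (u + v) = enc u ^^^ enc v := by
  intro n
  induction n with
  | zero => intro u v; show (0:ℕ) = 0 ^^^ 0; rfl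
  | succ n ih =>
    intro u v
    show ((u+v) 0).val + 2 * enc (fun i : Fin n => (u+v) i.succ) = enc u ^^^ enc v
    have he : (fun i : Fin n => (u+v) i.succ) =
        (fun i : Fin n => u i.succ) + (fun i : Fin n => v i.succ) := rfl
    rw [he, ih]
    exact (xor_step (u 0) (v 0) _ _).symm

theorem enc_mul {n : ℕ} (a : ZMod 2) (w : Fin n → ZMod 2) :
    enc (fun j => a * w j) = a.val * enc w := by
  rcases zmod2_cases a with rfl|rfl
  · simp only [zero_mul]
    rw [show (fun _ : Fin n => (0:ZMod 2)) = (0 : Fin n → ZMod 2) from rfl, enc_zero,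
      show ZMod.val (0 : ZMod 2) = 0 from rfl, zero_mul]
  · simp only [one_mul]
    rw [show (1 : ZMod 2).val = 1 from rfl, one_mul]

def xorSum : {k : ℕ} → (Fin k → ℕ) → ℕ
  | 0, _ => 0
  | _+1, f => f 0 ^^^ xorSum (fun i => f i.succ)

theorem vecMul_succ {k n : ℕ} (x : Fin (k+1) → ZMod 2)
    (M : Matrix (Fin (k+1)) (Fin n) (ZMod 2)) :
    x ᵥ* M = (fun j => x 0 * M 0 j) + (fun i : Fin k => x i.succ) ᵥ* (Matrix.of fun (i : Fin k) (j : Fin n) => M i.succ j) := by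
  funext j
  simp [Matrix.vecMul, dotProduct, Fin.sum_univ_succ]

theorem bridge : ∀ {k n : ℕ} (x : Fin k → ZMod 2) (M : Matrix (Fin k) (Fin n) (ZMod 2)),
    enc (x ᵥ* M) = xorSum (fun i => (x i).val * enc (fun j => M i j)) := by
  intro k
  induction k with
  | zero =>
    intro n x M
    have h : x ᵥ* M = 0 := by funext j; simp [Matrix.vecMul, dotProduct]
    rw [h, enc_zero]; rfl
  | succ k ih =>
    intro n x M
    rw [vecMul_succ, enc_add, enc_mul, ih]
    rfl

theorem sum_val : ∀ {n : ℕ} (v : Fin n → ZMod 2), (∑ k, (v k).val) = wtAux n (enc v) := by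
  intro n
  induction n with
  | zero => intro v; rfl
  | succ n ih =>
    intro v
    rw [Fin.sum_univ_succ, show wtAux (n+1) (enc v) = enc v % 2 + wtAux n (enc v / 2) from rfl,
      enc_mod_two, enc_div_two, ih]

end Aux

theorem int_one_le_sq {w : ℤ} (hw : w ≠ 0) : 1 ≤ w^2 := by
  nlinarith [Int.one_le_abs hw, sq_abs w, abs_nonneg w]

theorem cwN_enc (x : Fin 12 → ZMod 2) : cwN (enc x) = enc (x ᵥ* Ghat) := by
  have b0 : enc x >>> 0 &&& 1 = (x 0).val := enc_bit 0 x (by norm_num)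
  have b1 : enc x >>> 1 &&& 1 = (x 1).val := enc_bit 1 x (by norm_num)
  have b2 : enc x >>> 2 &&& 1 = (x 2).val := enc_bit 2 x (by norm_num)
  have b3 : enc x >>> 3 &&& 1 = (x 3).val := enc_bit 3 x (by norm_num)
  have b4 : enc x >>> 4 &&& 1 = (x 4).val := enc_bit 4 x (by norm_num)
  have b5 : enc x >>> 5 &&& 1 = (x 5).val := enc_bit 5 x (by norm_num)
  have b6 : enc x >>> 6 &&& 1 = (x 6).val := enc_bit 6 x (by norm_num)
  have b7 : enc x >>> 7 &&& 1 = (x 7).val := enc_bit 7 x (by norm_num)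
  have b8 : enc x >>> 8 &&& 1 = (x 8).val := enc_bit 8 x (by norm_num)
  have b9 : enc x >>> 9 &&& 1 = (x 9).val := enc_bit 9 x (by norm_num)
  have b10 : enc x >>> 10 &&& 1 = (x 10).val := enc_bit 10 x (by norm_num)
  have b11 : enc x >>> 11 &&& 1 = (x 11).val := enc_bit 11 x (by norm_num)
  have hR : xorSum (fun i : Fin 12 => (x i).val * enc (fun j => Ghat i j)) =
      (x 0).val * 983055 ^^^ ((x 1).val * 3342387 ^^^ ((x 2).val * 5570645 ^^^
      ((x 3).val * 16711935 ^^^ ((x 4).val * 986880 ^^^ ((x 5).val * 3355392 ^^^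
      ((x 6).val * 5592320 ^^^ ((x 7).val * 16776960 ^^^ ((x 8).val * 1973790 ^^^
      ((x 9).val * 3750201 ^^^ ((x 10).val * 5460819 ^^^ ((x 11).val * 16777215 ^^^
      0))))))))))) := by rfl
  calc cwN (enc x)
      = (x 0).val * 983055 ^^^ ((x 1).val * 3342387 ^^^ ((x 2).val * 5570645 ^^^
      ((x 3).val * 16711935 ^^^ ((x 4).val * 986880 ^^^ ((x 5).val * 3355392 ^^^
      ((x 6).val * 5592320 ^^^ ((x 7).val * 16776960 ^^^ ((x 8).val * 1973790 ^^^
      ((x 9).val * 3750201 ^^^ ((x 10).val * 5460819 ^^^ ((x 11).val * 16777215 ^^^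
      0))))))))))) := by
        show (enc x >>> 0 &&& 1) * 983055 ^^^ ((enc x >>> 1 &&& 1) * 3342387 ^^^
          ((enc x >>> 2 &&& 1) * 5570645 ^^^ ((enc x >>> 3 &&& 1) * 16711935 ^^^
          ((enc x >>> 4 &&& 1) * 986880 ^^^ ((enc x >>> 5 &&& 1) * 3355392 ^^^
          ((enc x >>> 6 &&& 1) * 5592320 ^^^ ((enc x >>> 7 &&& 1) * 16776960 ^^^
          ((enc x >>> 8 &&& 1) * 1973790 ^^^ ((enc x >>> 9 &&& 1) * 3750201 ^^^
          ((enc x >>> 10 &&& 1) * 5460819 ^^^ ((enc x >>> 11 &&& 1) * 16777215 ^^^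
          0))))))))))) = _
        rw [b0, b1, b2, b3, b4, b5, b6, b7, b8, b9, b10, b11]
    _ = enc (x ᵥ* Ghat) := by rw [bridge]; exact hR.symm

/-- the witness parity-check word: 1 on coordinates 0,1. -/
def cW : Fin 24 → ZMod 2 := fun i => if i.val < 2 then 1 else 0

/-- The minimum squared Euclidean norm of a nonzero vector of H24 is 8. -/
theorem H24_min_norm :
    (∀ v ∈ H24set, v ≠ 0 → 8 ≤ ∑ i, v i ^ 2) ∧
    (∃ v ∈ H24set, v ≠ 0 ∧ ∑ i, v i ^ 2 = 8) := by
  constructor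
  · rintro v ⟨z, c, g, hc, hgmem, rfl⟩ hv
    by_cases hg0 : g = 0
    · subst hg0
      by_cases hc0 : c = 0
      · subst hc0
        obtain ⟨i0, hi0⟩ := Function.ne_iff.1 hv
        have hz : z i0 ≠ 0 := by
          intro h
          apply hi0
          show 4 * z i0 + 2 * (((0:Fin 24 → ZMod 2) i0).val : ℤ) +
            (((0:Fin 24 → ZMod 2) i0).val : ℤ) = 0
          rw [h]; rfl
        calc (8:ℤ) ≤ (4 * z i0 + 2 * (((0:Fin 24 → ZMod 2) i0).val : ℤ) +
              (((0:Fin 24 → ZMod 2) i0).val : ℤ)) ^ 2 := by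
              rw [show ((((0:Fin 24 → ZMod 2) i0).val : ℤ)) = 0 from rfl]
              nlinarith [int_one_le_sq hz]
          _ ≤ ∑ i, (4 * z i + 2 * (((0:Fin 24 → ZMod 2) i).val : ℤ) +
              (((0:Fin 24 → ZMod 2) i).val : ℤ)) ^ 2 :=
              Finset.single_le_sum (f := fun i => (4 * z i + 2 * (((0:Fin 24 → ZMod 2) i).val : ℤ) +
                (((0:Fin 24 → ZMod 2) i).val : ℤ)) ^ 2)
                (fun i _ => sq_nonneg _) (Finset.mem_univ i0)
      · set S : Finset (Fin 24) := Finset.univ.filter (fun i => c i = 1) with hS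
        have hcsum : (∑ i, c i) = (S.card : ZMod 2) := by
          rw [← Finset.sum_filter_add_sum_filter_not Finset.univ (fun i => c i = 1) c]
          have h1 : (∑ i ∈ Finset.univ.filter (fun i => c i = 1), c i) = (S.card : ZMod 2) := by
            rw [Finset.sum_congr rfl (fun i hi => (Finset.mem_filter.1 hi).2)]
            simp [hS]
          have h2 : (∑ i ∈ Finset.univ.filter (fun i => ¬ c i = 1), c i) = 0 :=
            Finset.sum_eq_zero (fun i hi => by
              rcases zmod2_cases (c i) with h|h
              · exact h
              · exact absurd h (Finset.mem_filter.1 hi).2)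
          rw [h1, h2, add_zero]
        rw [hcsum] at hc
        have hdvd : 2 ∣ S.card := (ZMod.natCast_eq_zero_iff S.card 2).1 hc
        obtain ⟨i1, hi1⟩ := Function.ne_iff.1 hc0
        have hpos : 0 < S.card := Finset.card_pos.2 ⟨i1, by
          simp only [hS, Finset.mem_filter, Finset.mem_univ, true_and]
          rcases zmod2_cases (c i1) with h|h
          · exact absurd h hi1
          · exact h⟩
        have h2card : 2 ≤ S.card := by omega
        calc (8:ℤ) ≤ 4 * S.card := by
              have : (2:ℤ) ≤ S.card := by exact_mod_cast h2card
              linarith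
          _ = ∑ _i ∈ S, (4:ℤ) := by rw [Finset.sum_const, nsmul_eq_mul]; ring
          _ ≤ ∑ i ∈ S, (4 * z i + 2 * ((c i).val : ℤ) +
              (((0:Fin 24 → ZMod 2) i).val : ℤ)) ^ 2 := by
              refine Finset.sum_le_sum (fun i hi => ?_)
              have hci : c i = 1 := (Finset.mem_filter.1 hi).2
              rw [hci, show (((1:ZMod 2).val : ℤ)) = 1 from rfl,
                show ((((0:Fin 24 → ZMod 2) i).val : ℤ)) = 0 from rfl]
              nlinarith [int_one_le_sq (w := 2 * z i + 1) (by omega)]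
          _ ≤ ∑ i, (4 * z i + 2 * ((c i).val : ℤ) +
              (((0:Fin 24 → ZMod 2) i).val : ℤ)) ^ 2 :=
              Finset.sum_le_sum_of_subset_of_nonneg (Finset.subset_univ S)
                (fun i _ _ => sq_nonneg _)
    · obtain ⟨x, hx⟩ := hgmem
      rw [Matrix.vecMulLinear_apply] at hx
      have hlt : enc x < 4096 := by have := enc_lt x; norm_num at this; exact this
      rcases goodN_all (enc x) hlt with h0 | h8
      · exact absurd (enc_eq_zero g (by rw [← hx, ← cwN_enc]; exact h0)) hg0
      · have h8' : 8 ≤ ∑ k : Fin 24, (g k).val := by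
          rw [sum_val]
          rw [cwN_enc, hx] at h8
          exact h8
        calc (8:ℤ) ≤ ∑ k : Fin 24, ((g k).val : ℤ) := by exact_mod_cast h8'
          _ ≤ ∑ i, (4 * z i + 2 * ((c i).val : ℤ) + ((g i).val : ℤ)) ^ 2 := by
              refine Finset.sum_le_sum (fun i _ => ?_)
              rcases zmod2_cases (g i) with h|h <;> rw [h]
              · rw [show (((0:ZMod 2).val : ℤ)) = 0 from rfl]
                positivity
              · rw [show (((1:ZMod 2).val : ℤ)) = 1 from rfl]
                exact int_one_le_sq (by omega)
  · refine ⟨fun i => 4 * (0 : Fin 24 → ℤ) i + 2 * ((cW i).val : ℤ) +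
      (((0 : Fin 24 → ZMod 2) i).val : ℤ),
      ⟨0, cW, 0, by decide, Submodule.zero_mem _, rfl⟩, ?_, ?_⟩
    · intro h
      have h0 := congrFun h ⟨0, by norm_num⟩
      exact absurd h0 (by decide)
    · decide
end
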